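/- arXiv:1412.8190 — 6 statements merged into one kernel-verified Lean document; each statement's English description precedes it below -/
import Mathlib

section
/- For all integers n, k, d with n ≥ k > d ≥ 1, the maximum number of intersecting pairs in a family of n axis-parallel boxes in ℝ^d such that no k+1 of the boxes have a point in common equals t(n-k+d, d) + (C(n,2) - C(n-k+d, 2)). That is, this value is an upper bound for the number of intersecting pairs of every such family, and it is attained by some such family. -/
/-- Number of edges of the Turán graph `𝒯(n, m)`, the complete `m`-partite graph on `n`
vertices whose vertex-class sizes are as equal as possible. -/
noncomputable def turanEdges (n m : ℕ) : ℕ :=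
  (SimpleGraph.turanGraph n m).edgeFinset.card

/-- `S ⊆ ℝ^d` is an axis-parallel box: a product `∏ᵢ [aᵢ, bᵢ]` with `aᵢ ≤ bᵢ`. -/
def IsBox {d : ℕ} (S : Set (Fin d → ℝ)) : Prop :=
  ∃ a b : Fin d → ℝ, (∀ i, a i ≤ b i) ∧
    S = Set.pi Set.univ (fun i => Set.Icc (a i) (b i))

/-- Number of intersecting pairs of an indexed family of sets: the number of unordered
pairs `{i, j}` with `i ≠ j` and `B i ∩ B j ≠ ∅`. -/
noncomputable def interPairs {n : ℕ} {α : Type*} (B : Fin n → Set α) : ℕ :=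
  Set.ncard {p : Fin n × Fin n | p.1 < p.2 ∧ (B p.1 ∩ B p.2).Nonempty}

/-!
Upper bound: in some coordinate `c` take the box `i` whose right end `b i c` is smallest. Every
box meeting `i` contains a point whose `c`-th coordinate is `b i c`, so once that coordinate is
pinned these boxes form a family in one dimension less. After `d` such steps the surviving boxes
share a point, so at most `k` survive. Hence `n ≤ k + d·D` whenever no box is disjoint from more
than `D` others, i.e. some box is disjoint from at least `⌈(n - k)/d⌉` others. Deleting that box
and inducting on `n` gives the bound, since by `t(m + 1, d) = t(m, d) + m - ⌊m/d⌋` the bound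
grows from `n` to `n + 1` by exactly `n - ⌊(n - k + d)/d⌋ = n - ⌈(n + 1 - k)/d⌉`.

Construction: with `m = n - k + d`, box `i < m` is the hyperplane `x_{i mod d} = i` inside the
cube `[0, n]^d` and the remaining `k - d` boxes are the whole cube. Two boxes are disjoint iff
both are hyperplanes in the same direction, i.e. iff they form a non-edge of `𝒯(m, d)`, and a
point lies in at most one hyperplane per direction.
-/

open Finset SimpleGraph
open Set (Icc)

theorem Nat.succ_choose_two (n : ℕ) : (n + 1).choose 2 = n.choose 2 + n := by
  rw [Nat.choose_succ_succ', Nat.choose_one_right, add_comm]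

theorem Fin.card_filter_univ_eq_card_filter_range {n : ℕ} (p : ℕ → Prop) [DecidablePred p] :
    #{i : Fin n | p i} = #{i ∈ range n | p i} := by
  rw [← Nat.Iio_eq_range, ← Fin.map_valEmbedding_univ, filter_map, card_map]
  rfl

namespace SimpleGraph

theorem card_edgeFinset_eq_ncard_lt {V : Type*} [LinearOrder V] [Fintype V] (G : SimpleGraph V)
    [DecidableRel G.Adj] : #G.edgeFinset = {p : V × V | p.1 < p.2 ∧ G.Adj p.1 p.2}.ncard := by
  rw [← Set.ncard_coe_finset, coe_edgeFinset]
  symm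
  refine Set.ncard_congr (fun p _ => s(p.1, p.2)) (fun p hp => hp.2) ?_ ?_
  · rintro ⟨x, y⟩ ⟨x', y'⟩ ⟨hxy, -⟩ ⟨hxy', -⟩ h
    rcases Sym2.eq_iff.1 h with ⟨rfl, rfl⟩ | ⟨rfl, rfl⟩
    · rfl
    · exact absurd (hxy.trans hxy') (lt_irrefl _)
  · refine Sym2.ind fun x y hxy => ?_
    rcases (G.ne_of_adj hxy).lt_or_gt with h | h
    · exact ⟨(x, y), ⟨h, hxy⟩, rfl⟩
    · exact ⟨(y, x), ⟨h, hxy.symm⟩, Sym2.eq_swap⟩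

variable {V : Type*} [Fintype V] [DecidableEq V]

theorem card_edgeFinset_add_card_edgeFinset_compl (G : SimpleGraph V) [DecidableRel G.Adj] :
    #G.edgeFinset + #Gᶜ.edgeFinset = (Fintype.card V).choose 2 := by
  rw [← card_edgeFinset_top_eq_card_choose_two,
    ← card_union_of_disjoint (disjoint_edgeFinset.2 disjoint_compl_right), ← edgeFinset_sup]
  congr! 2
  exact sup_compl_eq_top

theorem card_edgeFinset_induce_compl_singleton_add_degree (G : SimpleGraph V)
    [DecidableRel G.Adj] (x : V) : #(G.induce {x}ᶜ).edgeFinset + G.degree x = #G.edgeFinset := by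
  rw [card_edgeFinset_induce_compl_singleton, card_edgeFinset_deleteIncidenceSet]
  exact Nat.sub_add_cancel (G.degree_le_card_edgeFinset x)

end SimpleGraph

theorem turanGraph_deleteIncidenceSet_last (m d : ℕ) :
    (turanGraph (m + 1) d).deleteIncidenceSet (Fin.last m) =
      (turanGraph m d).map Fin.castSuccEmb := by
  ext v w
  rw [deleteIncidenceSet_adj, map_adj]
  cases v using Fin.lastCases <;> cases w using Fin.lastCases <;> simp [turanGraph_adj]

theorem degree_turanGraph_last {d : ℕ} (hd : 0 < d) (m : ℕ) :
    (turanGraph (m + 1) d).degree (Fin.last m) = m - m / d := by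
  have hcard : #{w ∈ range m | w ≡ m [MOD d]} = m / d := by
    rw [← Nat.count_eq_card_filter_range, Nat.count_modEq_card _ hd]
    simp
  rw [← card_neighborFinset_eq_degree, neighborFinset_eq_filter]
  simp only [turanGraph_adj, Fin.val_last, ne_comm (a := m % d)]
  rw [Fin.card_filter_univ_eq_card_filter_range (fun w => w % d ≠ m % d), range_add_one,
    filter_insert, if_neg (by simp), filter_not, card_sdiff_of_subset (filter_subset _ _),
    card_range]
  exact congrArg (m - ·) hcard

theorem turanEdges_succ {d : ℕ} (hd : 0 < d) (m : ℕ) :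
    turanEdges (m + 1) d = turanEdges m d + (m - m / d) := by
  have hdel := card_edgeFinset_deleteIncidenceSet (turanGraph (m + 1) d) (Fin.last m)
  have hdeg := (turanGraph (m + 1) d).degree_le_card_edgeFinset (Fin.last m)
  have hmap : #((turanGraph (m + 1) d).deleteIncidenceSet (Fin.last m)).edgeFinset =
      #(turanGraph m d).edgeFinset := by
    convert card_edgeFinset_map Fin.castSuccEmb (turanGraph m d) using 3
    exact turanGraph_deleteIncidenceSet_last m d
  rw [degree_turanGraph_last hd] at hdel hdeg
  unfold turanEdges
  omega

theorem turanEdges_self (d : ℕ) : turanEdges d d = d.choose 2 := by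
  unfold turanEdges
  convert card_edgeFinset_top_eq_card_choose_two (V := Fin d) using 3
  · exact turanGraph_eq_top.2 (Or.inr le_rfl)
  · simp

noncomputable def maxIntersectingPairs (n k d : ℕ) : ℕ :=
  turanEdges (n - k + d) d + (n.choose 2 - (n - k + d).choose 2)

theorem maxIntersectingPairs_self {k d : ℕ} (hdk : d ≤ k) :
    maxIntersectingPairs k k d = k.choose 2 := by
  have := Nat.choose_le_choose 2 hdk
  rw [maxIntersectingPairs, Nat.sub_self, zero_add, turanEdges_self]
  omega

theorem maxIntersectingPairs_succ {n k d : ℕ} (hd : 0 < d) (hdk : d ≤ k) (hkn : k ≤ n) :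
    maxIntersectingPairs (n + 1) k d =
      maxIntersectingPairs n k d + (n - (n - k + d) / d) := by
  have hm : n + 1 - k + d = n - k + d + 1 := by omega
  have hchoose := Nat.choose_le_choose 2 (show n - k + d ≤ n by omega)
  have hdiv := Nat.div_le_self (n - k + d) d
  rw [maxIntersectingPairs, maxIntersectingPairs, hm, turanEdges_succ hd,
    Nat.succ_choose_two, Nat.succ_choose_two]
  omega

section IntersectionGraph

variable {ι β : Type*}

def intersectionGraph (B : ι → Set β) : SimpleGraph ι where
  Adj i j := i ≠ j ∧ (B i ∩ B j).Nonempty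
  symm := ⟨fun _ _ h => ⟨h.1.symm, Set.inter_comm _ _ ▸ h.2⟩⟩
  loopless := ⟨fun _ h => h.1 rfl⟩

@[simp]
theorem intersectionGraph_adj {B : ι → Set β} {i j : ι} :
    (intersectionGraph B).Adj i j ↔ i ≠ j ∧ (B i ∩ B j).Nonempty :=
  Iff.rfl

theorem intersectionGraph_induce (B : ι → Set β) (s : Set ι) :
    (intersectionGraph B).induce s = intersectionGraph fun i : s => B i := by
  ext i j
  simp [Subtype.ext_iff]

theorem interPairs_eq_card_edgeFinset {n : ℕ} (B : Fin n → Set β)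
    [DecidableRel (intersectionGraph B).Adj] :
    interPairs B = #(intersectionGraph B).edgeFinset := by
  rw [card_edgeFinset_eq_ncard_lt, interPairs]
  congr! 3 with p
  simp only [intersectionGraph_adj]
  exact ⟨fun h => ⟨h.1, h.1.ne, h.2⟩, fun h => ⟨h.1, h.2.2⟩⟩

open Classical in
theorem degree_intersectionGraph_add_card_disjoint_lt [Fintype ι] (B : ι → Set β) {i : ι}
    (hi : (B i).Nonempty) :
    (intersectionGraph B).degree i + #{j | Disjoint (B i) (B j)} < Fintype.card ι := by
  set D : Finset ι := {j | Disjoint (B i) (B j)}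
  have hdisj : Disjoint ((intersectionGraph B).neighborFinset i) D := by
    refine Finset.disjoint_left.2 fun j hadj hD => ?_
    rw [mem_neighborFinset, intersectionGraph_adj] at hadj
    exact Set.not_disjoint_iff_nonempty_inter.2 hadj.2 (mem_filter.1 hD).2
  have hsub : (intersectionGraph B).neighborFinset i ∪ D ⊆ univ.erase i := by
    intro j hj
    refine mem_erase.2 ⟨?_, mem_univ j⟩
    rcases mem_union.1 hj with h | h
    · exact ((intersectionGraph B).ne_of_adj ((mem_neighborFinset _ _ _).1 h)).symm
    · rintro rfl
      exact hi.ne_empty (disjoint_self.1 (mem_filter.1 h).2)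
  have hcard := card_le_card hsub
  rw [card_union_of_disjoint hdisj, card_neighborFinset_eq_degree, card_erase_of_mem (mem_univ i),
    card_univ] at hcard
  have : 0 < Fintype.card ι := Fintype.card_pos_iff.2 ⟨i⟩
  omega

end IntersectionGraph

section Boxes

variable {ι κ α : Type*} [LinearOrder α]

open Classical in
theorem card_le_add_card_mul_of_card_disjoint_le (a b : ι → κ → α) {k D : ℕ} {s : Finset ι}
    (hdepth : ∀ x, #{i ∈ s | x ∈ Icc (a i) (b i)} ≤ k)
    (hdisj : ∀ i ∈ s, #{j ∈ s | Disjoint (Icc (a i) (b i)) (Icc (a j) (b j))} ≤ D)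
    (C : Finset κ) (x₀ : κ → α) (hx₀ : ∀ i ∈ s, ∀ c ∉ C, x₀ c ∈ Icc (a i c) (b i c)) :
    #s ≤ k + #C * D := by
  induction C using Finset.induction_on generalizing s x₀ with
  | empty =>
    rw [Finset.card_empty, zero_mul, add_zero]
    refine le_trans (card_le_card fun i hi => mem_filter.2 ⟨hi, ?_⟩) (hdepth x₀)
    exact ⟨fun c => (hx₀ i hi c (notMem_empty c)).1, fun c => (hx₀ i hi c (notMem_empty c)).2⟩
  | insert c C hc ih =>
    rcases s.eq_empty_or_nonempty with rfl | hs
    · simp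
    obtain ⟨i, hi, hmin⟩ := s.exists_min_image (fun j => b j c) hs
    set N := {j ∈ s | ¬Disjoint (Icc (a i) (b i)) (Icc (a j) (b j))}
    have hNs : N ⊆ s := filter_subset _ _
    -- `b i c` is minimal, so every box of `N` contains the value `b i c` in coordinate `c`
    have hN : #N ≤ k + #C * D := by
      refine ih (fun x => (card_le_card (filter_subset_filter _ hNs)).trans (hdepth x))
        (fun j hj => (card_le_card (filter_subset_filter _ hNs)).trans (hdisj j (hNs hj)))
        (Function.update x₀ c (b i c)) fun j hj c' hc' => ?_
      obtain ⟨hjs, hij⟩ := mem_filter.1 hj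
      rcases eq_or_ne c' c with rfl | hne
      · obtain ⟨y, hyi, hyj⟩ := Set.not_disjoint_iff.1 hij
        rw [Function.update_self]
        exact ⟨(hyj.1 c').trans (hyi.2 c'), hmin j hjs⟩
      · rw [Function.update_of_ne hne]
        exact hx₀ j hjs c' (by simp [hne, hc'])
    have hsplit : #{j ∈ s | Disjoint (Icc (a i) (b i)) (Icc (a j) (b j))} + #N = #s :=
      card_filter_add_card_filter_not _
    have := hdisj i hi
    rw [card_insert_of_notMem hc, add_one_mul]
    omega

open Classical in
theorem exists_card_le_add_mul_card_disjoint [Fintype ι] [Nonempty ι] [Fintype κ]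
    (a b : ι → κ → α) {k : ℕ} (hdepth : ∀ x, #{i | x ∈ Icc (a i) (b i)} ≤ k) :
    ∃ i, Fintype.card ι ≤
      k + Fintype.card κ * #{j | Disjoint (Icc (a i) (b i)) (Icc (a j) (b j))} := by
  obtain ⟨i, -, hmax⟩ := exists_max_image univ
    (fun i => #{j | Disjoint (Icc (a i) (b i)) (Icc (a j) (b j))}) univ_nonempty
  refine ⟨i, ?_⟩
  simpa using card_le_add_card_mul_of_card_disjoint_le a b (s := univ) hdepth
    (fun j _ => hmax j (mem_univ j)) univ (a i) (by simp)

open Classical in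
theorem card_edgeFinset_intersectionGraph_le [Fintype ι] [Fintype κ] {k : ℕ}
    (hκ : 0 < Fintype.card κ) (hκk : Fintype.card κ ≤ k) (a b : ι → κ → α) (hab : a ≤ b)
    (hdepth : ∀ x, #{i | x ∈ Icc (a i) (b i)} ≤ k) (hk : k ≤ Fintype.card ι) :
    #(intersectionGraph fun i => Icc (a i) (b i)).edgeFinset ≤
      maxIntersectingPairs (Fintype.card ι) k (Fintype.card κ) := by
  obtain ⟨n, hn⟩ : ∃ n, Fintype.card ι = n := ⟨_, rfl⟩
  rw [hn] at hk ⊢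
  induction n, hk using Nat.le_induction generalizing ι with
  | base =>
    rw [maxIntersectingPairs_self hκk, ← hn]
    exact card_edgeFinset_le_card_choose_two
  | succ n hkn ih =>
    have : Nonempty ι := Fintype.card_pos_iff.1 (by omega)
    obtain ⟨i, hi⟩ := exists_card_le_add_mul_card_disjoint a b hdepth
    have hcard : Fintype.card ({i}ᶜ : Set ι) = n := by
      rw [Fintype.card_compl_set, hn, Fintype.card_unique, Nat.add_sub_cancel]
    have hrest := ih (fun j : ({i}ᶜ : Set ι) => a j) (fun j => b j) (fun j => hab j)
      (fun x => (card_le_card_of_injOn Subtype.val (fun j hj => by simpa using hj)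
        Subtype.val_injective.injOn).trans (hdepth x)) hcard
    have hind : #((intersectionGraph fun j => Icc (a j) (b j)).induce {i}ᶜ).edgeFinset =
        #(intersectionGraph fun j : ({i}ᶜ : Set ι) => Icc (a j) (b j)).edgeFinset := by
      congr! 2
      exact intersectionGraph_induce _ _
    have hsum := card_edgeFinset_induce_compl_singleton_add_degree
      (intersectionGraph fun j => Icc (a j) (b j)) i
    have hdeg := degree_intersectionGraph_add_card_disjoint_lt (fun j => Icc (a j) (b j))
      (Set.nonempty_Icc.2 (hab i))
    have hdiv : (n - k + Fintype.card κ) / Fintype.card κ ≤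
        #{j | Disjoint (Icc (a i) (b i)) (Icc (a j) (b j))} :=
      Nat.lt_succ_iff.1 ((Nat.div_lt_iff_lt_mul hκ).2 (by rw [Nat.succ_mul, mul_comm]; omega))
    rw [maxIntersectingPairs_succ hκ hκk hkn]
    omega

end Boxes

theorem interPairs_le_maxIntersectingPairs {n k d : ℕ} (hkn : k ≤ n) (hd : 0 < d) (hdk : d ≤ k)
    (B : Fin n → Set (Fin d → ℝ)) (hB : ∀ i, IsBox (B i))
    (hdepth : ∀ x : Fin d → ℝ, {i | x ∈ B i}.ncard ≤ k) :
    interPairs B ≤ maxIntersectingPairs n k d := by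
  classical
  choose a b hab hBab using hB
  obtain rfl : B = fun i => Icc (a i) (b i) := funext fun i => (hBab i).trans (Set.pi_univ_Icc _ _)
  rw [interPairs_eq_card_edgeFinset]
  simpa using card_edgeFinset_intersectionGraph_le (by simpa) (by simpa) a b hab
    (fun x => by simpa [Set.ncard_eq_toFinset_card'] using hdepth x) (by simpa)

def turanBoxes (n m d : ℕ) (i : Fin n) : Set (Fin d → ℝ) :=
  Set.univ.pi fun c => if (i : ℕ) < m ∧ (c : ℕ) = i % d then {(i : ℝ)} else Icc 0 n

theorem isBox_turanBoxes (n m d : ℕ) (i : Fin n) : IsBox (turanBoxes n m d i) := by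
  refine ⟨fun c => if (i : ℕ) < m ∧ (c : ℕ) = i % d then i else 0,
    fun c => if (i : ℕ) < m ∧ (c : ℕ) = i % d then i else n, fun c => ?_, ?_⟩
  · dsimp only
    split_ifs
    exacts [le_rfl, by positivity]
  · refine congrArg _ (funext fun c => ?_)
    dsimp only
    split_ifs <;> simp

theorem ncard_mem_turanBoxes_le {n m d : ℕ} (hmn : m ≤ n) (hd : 0 < d) (x : Fin d → ℝ) :
    {i | x ∈ turanBoxes n m d i}.ncard ≤ n - m + d := by
  have hsub : {i | x ∈ turanBoxes n m d i} ⊆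
      {i : Fin n | m ≤ i} ∪ {i | (i : ℕ) < m ∧ x ∈ turanBoxes n m d i} := by
    intro i hi
    by_cases h : (i : ℕ) < m
    · exact Or.inr ⟨h, hi⟩
    · exact Or.inl (not_lt.1 h)
  have hlarge : {i : Fin n | m ≤ i}.ncard ≤ n - m := by
    have hsplit := card_filter_add_card_filter_not (s := (univ : Finset (Fin n)))
      (fun i => (i : ℕ) < m)
    rw [Fin.card_filter_val_lt, card_univ, Fintype.card_fin] at hsplit
    simp only [not_lt] at hsplit
    rw [Set.ncard_eq_toFinset_card', Set.toFinset_ofPred]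
    omega
  have hsmall : {i : Fin n | (i : ℕ) < m ∧ x ∈ turanBoxes n m d i}.ncard ≤ d := by
    refine le_of_le_of_eq (Set.ncard_le_ncard_of_injOn (t := Set.univ)
      (fun i => (⟨i % d, Nat.mod_lt _ hd⟩ : Fin d)) (fun _ _ => Set.mem_univ _) ?_) (by simp)
    rintro i ⟨him, hi⟩ j ⟨hjm, hj⟩ hij
    have hmod : (i : ℕ) % d = j % d := congrArg Fin.val hij
    have hxi := hi ⟨i % d, Nat.mod_lt _ hd⟩ (Set.mem_univ _)
    have hxj := hj ⟨i % d, Nat.mod_lt _ hd⟩ (Set.mem_univ _)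
    simp only [him, hjm, hmod, true_and, if_true, Set.mem_singleton_iff] at hxi hxj
    exact Fin.ext (by exact_mod_cast hxi.symm.trans hxj)
  calc _ ≤ _ := Set.ncard_le_ncard hsub
    _ ≤ _ := Set.ncard_union_le _ _
    _ ≤ n - m + d := by omega

theorem turanBoxes_inter_nonempty_iff {n m d : ℕ} (hd : 0 < d) {i j : Fin n} (hij : i ≠ j) :
    (turanBoxes n m d i ∩ turanBoxes n m d j).Nonempty ↔
      ¬((i : ℕ) < m ∧ (j : ℕ) < m ∧ (i : ℕ) % d = j % d) := by
  have hi : (i : ℝ) ≤ n := by exact_mod_cast i.isLt.le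
  have hj : (j : ℝ) ≤ n := by exact_mod_cast j.isLt.le
  have hij' : (i : ℝ) ≠ j := by exact_mod_cast Fin.val_injective.ne hij
  simp only [turanBoxes, ← Set.pi_inter_distrib, Set.univ_pi_nonempty_iff]
  constructor
  · rintro h ⟨him, hjm, hmod⟩
    have := h ⟨i % d, Nat.mod_lt _ hd⟩
    simp [him, hjm, hmod, hij'] at this
  · intro h c
    split_ifs with h1 h2 h2
    · exact absurd ⟨h1.1, h2.1, h1.2.symm.trans h2.2⟩ h
    · simp [hi]
    · simp [hj]
    · simp

theorem intersectionGraph_turanBoxes {n m d : ℕ} (hmn : m ≤ n) (hd : 0 < d) :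
    intersectionGraph (turanBoxes n m d) = ((turanGraph m d)ᶜ.map (Fin.castLEEmb hmn))ᶜ := by
  ext i j
  rw [intersectionGraph_adj, compl_adj, map_adj]
  refine and_congr_right fun hij => ?_
  rw [turanBoxes_inter_nonempty_iff hd hij]
  constructor
  · rintro h ⟨u, v, huv, rfl, rfl⟩
    rw [compl_adj, turanGraph_adj, not_not] at huv
    exact h ⟨u.isLt, v.isLt, huv.2⟩
  · rintro h ⟨him, hjm, hmod⟩
    refine h ⟨⟨i, him⟩, ⟨j, hjm⟩, ?_, rfl, rfl⟩
    rw [compl_adj, turanGraph_adj, not_not]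
    exact ⟨fun heq => hij (Fin.ext (by simpa using congrArg Fin.val heq)), hmod⟩

theorem card_edgeFinset_compl_map_compl_turanGraph {n m d : ℕ} (hmn : m ≤ n) :
    #(((turanGraph m d)ᶜ.map (Fin.castLEEmb hmn))ᶜ).edgeFinset =
      turanEdges m d + (n.choose 2 - m.choose 2) := by
  have hn := card_edgeFinset_add_card_edgeFinset_compl ((turanGraph m d)ᶜ.map (Fin.castLEEmb hmn))
  have hm := card_edgeFinset_add_card_edgeFinset_compl (turanGraph m d)
  have hmap : #((turanGraph m d)ᶜ.map (Fin.castLEEmb hmn)).edgeFinset =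
      #(turanGraph m d)ᶜ.edgeFinset := by
    convert card_edgeFinset_map (Fin.castLEEmb hmn) (turanGraph m d)ᶜ
  rw [Fintype.card_fin] at hn hm
  have := Nat.choose_le_choose 2 hmn
  unfold turanEdges
  omega

theorem interPairs_turanBoxes {n m d : ℕ} (hmn : m ≤ n) (hd : 0 < d) :
    interPairs (turanBoxes n m d) = turanEdges m d + (n.choose 2 - m.choose 2) := by
  classical
  rw [interPairs_eq_card_edgeFinset, ← card_edgeFinset_compl_map_compl_turanGraph hmn]
  congr! 2
  exact intersectionGraph_turanBoxes hmn hd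

/-- For `n ≥ k > d ≥ 1`, the maximal number of intersecting pairs in a family of `n`
axis-parallel boxes in `ℝ^d`, no `k+1` of which have a common point, equals
`t(n-k+d, d) + (C(n,2) - C(n-k+d, 2))`: it is an upper bound for every such family
and it is attained by some such family. -/
theorem boxes_extremal (n k d : ℕ) (hkn : k ≤ n) (hdk : d < k) (hd : 1 ≤ d) :
    (∀ B : Fin n → Set (Fin d → ℝ), (∀ i, IsBox (B i)) →
        (∀ x : Fin d → ℝ, Set.ncard {i | x ∈ B i} ≤ k) →
        interPairs B ≤
          turanEdges (n - k + d) d + (Nat.choose n 2 - Nat.choose (n - k + d) 2)) ∧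
    (∃ B : Fin n → Set (Fin d → ℝ), (∀ i, IsBox (B i)) ∧
        (∀ x : Fin d → ℝ, Set.ncard {i | x ∈ B i} ≤ k) ∧
        interPairs B =
          turanEdges (n - k + d) d + (Nat.choose n 2 - Nat.choose (n - k + d) 2)) := by
  refine ⟨interPairs_le_maxIntersectingPairs hkn hd hdk.le, turanBoxes n (n - k + d) d,
    isBox_turanBoxes _ _ _, fun x => ?_, interPairs_turanBoxes (by omega) hd⟩
  exact (ncard_mem_turanBoxes_le (by omega) hd x).trans (by omega)
end

section
/- For all integers n ≥ k ≥ 1, the maximum number of intersecting pairs in a family of n axis-parallel boxes in ℝ^1 (i.e., closed intervals in ℝ) such that no k+1 of them have a point in common equals C(n,2) - C(n-k+1, 2). That is, this value is an upper bound for the number of intersecting pairs of every such family, and it is attained by some such family (for instance, k-1 copies of one interval together with n-k+1 pairwise disjoint intervals, each intersecting the common interval). -/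
/-- `S ⊆ ℝ` is a closed interval `[a, b]` with `a ≤ b`. -/
def IsInterval (S : Set ℝ) : Prop :=
  ∃ a b : ℝ, a ≤ b ∧ S = Set.Icc a b

/-!
Reindexing the intervals by increasing left endpoint does not change the number of intersecting
pairs. After that, every `B i` with `i < j` that meets `B j = [a j, b j]` contains `a j`; since at
most `k` intervals contain `a j` and `B j` is one of them, `B j` meets at most `min (k - 1) j`
earlier intervals, and `∑_{j < n} min (k - 1) j = C(n,2) - C(n-k+1,2)`. The bound is attained by
`k - 1` copies of `[0, n]` together with the points `{i}`, `k - 1 ≤ i < n`, where `B j` meets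
exactly `min (k - 1) j` earlier intervals.
-/

open Finset

theorem sum_range_min_add_choose_two (t n : ℕ) :
    ∑ m ∈ range n, min t m + (n - t).choose 2 = n.choose 2 := by
  have choose_two_succ (m : ℕ) : (m + 1).choose 2 = m.choose 2 + m := by
    rw [Nat.choose_succ_succ', Nat.choose_one_right, add_comm]
  induction n with
  | zero => simp
  | succ n ih =>
    rw [sum_range_succ, choose_two_succ, ← ih]
    rcases le_or_gt t n with h | h
    · rw [show n + 1 - t = n - t + 1 by omega, choose_two_succ]
      omega
    · rw [show n + 1 - t = 0 by omega, show n - t = 0 by omega]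
      simp only [Nat.choose_zero_succ]
      omega

theorem sum_min_val_eq_choose_two_sub (t n : ℕ) :
    ∑ j : Fin n, min t (j : ℕ) = n.choose 2 - (n - t).choose 2 := by
  rw [Fin.sum_univ_eq_sum_range (fun j => min t j), ← sum_range_min_add_choose_two t n]
  omega

namespace interPairs

variable {α : Type*} {n : ℕ}

open scoped Classical in
theorem eq_sum_card (B : Fin n → Set α) :
    interPairs B = ∑ j, #{i | i < j ∧ (B i ∩ B j).Nonempty} := by
  rw [interPairs, Set.ncard_eq_toFinset_card', Set.toFinset_ofPred, card_filter,
    Fintype.sum_prod_type_right]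
  simp only [card_filter]

theorem two_mul_eq_ncard (B : Fin n → Set α) :
    2 * interPairs B =
      Set.ncard {p : Fin n × Fin n | p.1 ≠ p.2 ∧ (B p.1 ∩ B p.2).Nonempty} := by
  set S := {p : Fin n × Fin n | p.1 < p.2 ∧ (B p.1 ∩ B p.2).Nonempty}
  have hsplit : {p : Fin n × Fin n | p.1 ≠ p.2 ∧ (B p.1 ∩ B p.2).Nonempty} =
      S ∪ Prod.swap ⁻¹' S := by
    ext ⟨i, j⟩
    simp only [S, ne_iff_lt_or_gt, Set.mem_ofPred_eq, Set.mem_union, Set.mem_preimage,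
      Prod.swap_prod_mk, Set.inter_comm (B j)]
    tauto
  have hdisj : Disjoint S (Prod.swap ⁻¹' S) :=
    Set.disjoint_left.mpr fun p h h' => lt_asymm h.1 h'.1
  rw [hsplit, Set.ncard_union_eq hdisj,
    Set.ncard_preimage_of_injective_subset_range Prod.swap_injective
      (Prod.swap_surjective.range_eq ▸ Set.subset_univ S), interPairs]
  ring

theorem comp_perm (B : Fin n → Set α) (σ : Equiv.Perm (Fin n)) :
    interPairs (B ∘ σ) = interPairs B := by
  have h := two_mul_eq_ncard (B ∘ σ)
  rw [show {p : Fin n × Fin n | p.1 ≠ p.2 ∧ ((B ∘ σ) p.1 ∩ (B ∘ σ) p.2).Nonempty} =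
      Prod.map σ σ ⁻¹' {p | p.1 ≠ p.2 ∧ (B p.1 ∩ B p.2).Nonempty} by
      ext; simp,
    Set.ncard_preimage_of_injective_subset_range (σ.injective.prodMap σ.injective)
      (by simp [(σ.surjective.prodMap σ.surjective).range_eq]), ← two_mul_eq_ncard] at h
  omega

end interPairs

open scoped Classical in
theorem interPairs_le_of_forall_card_le {α : Type*} {n : ℕ} (B : Fin n → Set α) (t : ℕ)
    (h : ∀ j, #{i | i < j ∧ (B i ∩ B j).Nonempty} ≤ t) :
    interPairs B ≤ n.choose 2 - (n - t).choose 2 := by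
  rw [interPairs.eq_sum_card, ← sum_min_val_eq_choose_two_sub]
  gcongr with j
  refine le_min (h j) ((card_le_card fun i hi => ?_).trans (Fin.card_Iio j).le)
  exact mem_Iio.2 (mem_filter.1 hi).2.1

section Intervals

variable {n k : ℕ}

open scoped Classical in
theorem card_filter_lt_inter_nonempty_le {B : Fin n → Set ℝ} {a b : Fin n → ℝ}
    (hB : ∀ i, B i = Set.Icc (a i) (b i)) (hab : ∀ i, a i ≤ b i) (ha : Monotone a)
    (hd : ∀ x, {i | x ∈ B i}.ncard ≤ k) (j : Fin n) :
    #{i | i < j ∧ (B i ∩ B j).Nonempty} ≤ k - 1 := by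
  have hsub : ({i | i < j ∧ (B i ∩ B j).Nonempty} : Finset _) ⊆
      ({i | a j ∈ B i} : Finset _).erase j := by
    intro i hi
    obtain ⟨hij, x, hxi, hxj⟩ := (mem_filter_univ i).1 hi
    rw [hB] at hxi hxj
    rw [mem_erase, mem_filter_univ, hB]
    exact ⟨hij.ne, ha hij.le, hxj.1.trans hxi.2⟩
  have hj : j ∈ ({i | a j ∈ B i} : Finset _) := by simp [hB, hab]
  have hcard : #{i | a j ∈ B i} ≤ k := by
    simpa [Set.ncard_eq_toFinset_card'] using hd (a j)
  grw [card_le_card hsub, card_erase_of_mem hj, hcard]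

theorem interPairs_le_of_ncard_le {B : Fin n → Set ℝ} (hB : ∀ i, IsInterval (B i))
    (hd : ∀ x, {i | x ∈ B i}.ncard ≤ k) :
    interPairs B ≤ n.choose 2 - (n - (k - 1)).choose 2 := by
  choose a b hab hB using hB
  set σ := Tuple.sort a
  rw [← interPairs.comp_perm B σ]
  refine interPairs_le_of_forall_card_le _ _ fun j => ?_
  refine card_filter_lt_inter_nonempty_le (a := a ∘ σ) (b := b ∘ σ) (fun i => hB (σ i))
    (fun i => hab (σ i)) (Tuple.monotone_sort a) (fun x => ?_) j
  change (σ ⁻¹' {i | x ∈ B i}).ncard ≤ k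
  rw [Set.ncard_preimage_of_injective_subset_range σ.injective (by simp)]
  exact hd x

end Intervals

def extremalFamily (n k : ℕ) (i : Fin n) : Set ℝ :=
  if (i : ℕ) < k - 1 then Set.Icc 0 n else {(i : ℝ)}

namespace extremalFamily

variable {n k : ℕ}

theorem isInterval (i : Fin n) : IsInterval (extremalFamily n k i) := by
  unfold extremalFamily
  split_ifs
  · exact ⟨0, n, n.cast_nonneg, rfl⟩
  · exact ⟨i, i, le_rfl, (Set.Icc_self _).symm⟩

theorem self_mem (i : Fin n) : (i : ℝ) ∈ extremalFamily n k i := by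
  unfold extremalFamily
  split_ifs
  · exact ⟨i.val.cast_nonneg, by exact_mod_cast i.is_lt.le⟩
  · rfl

theorem ncard_setOf_mem_le (hk : 1 ≤ k) (x : ℝ) :
    {i | x ∈ extremalFamily n k i}.ncard ≤ k := by
  have hsub : {i | x ∈ extremalFamily n k i} ⊆
      {i : Fin n | (i : ℕ) < k - 1} ∪ {i | (i : ℝ) = x} := by
    intro i hi
    by_cases h : (i : ℕ) < k - 1
    · exact Or.inl h
    · simp only [extremalFamily, h, if_false, Set.mem_ofPred_eq, Set.mem_singleton_iff] at hi
      exact Or.inr hi.symm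
  have hlow : {i : Fin n | (i : ℕ) < k - 1}.ncard ≤ k - 1 := by
    rw [Set.ncard_eq_toFinset_card', Set.toFinset_ofPred, Fin.card_filter_val_lt]
    exact min_le_right _ _
  have hsingle : {i : Fin n | (i : ℝ) = x}.ncard ≤ 1 :=
    (Set.ncard_le_one (Set.toFinite _)).2 fun i hi j hj =>
      Fin.ext (Nat.cast_injective (hi.trans hj.symm))
  grw [Set.ncard_le_ncard hsub, Set.ncard_union_le, hlow, hsingle]
  omega

theorem inter_nonempty_iff {i j : Fin n} (hij : i < j) :
    (extremalFamily n k i ∩ extremalFamily n k j).Nonempty ↔ (i : ℕ) < k - 1 := by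
  constructor
  · rintro ⟨x, hxi, hxj⟩
    by_contra h
    have h' : ¬ (j : ℕ) < k - 1 := by omega
    simp only [extremalFamily, h, h', if_false, Set.mem_singleton_iff] at hxi hxj
    exact hij.ne (Fin.ext (Nat.cast_injective (hxi.symm.trans hxj)))
  · intro h
    refine ⟨j, ?_, self_mem j⟩
    simp only [extremalFamily, h, if_true]
    exact ⟨j.val.cast_nonneg, by exact_mod_cast j.is_lt.le⟩

open scoped Classical in
theorem interPairs_eq :
    interPairs (extremalFamily n k) = n.choose 2 - (n - (k - 1)).choose 2 := by
  rw [interPairs.eq_sum_card, ← sum_min_val_eq_choose_two_sub]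
  refine sum_congr rfl fun j _ => ?_
  have hfilter :
      ({i | i < j ∧ (extremalFamily n k i ∩ extremalFamily n k j).Nonempty} : Finset _) =
        ({i : Fin n | (i : ℕ) < min (k - 1) j} : Finset _) := by
    ext i
    rw [mem_filter_univ, mem_filter_univ, lt_min_iff, and_comm, ← Fin.lt_def]
    exact and_congr_left inter_nonempty_iff
  rw [hfilter, Fin.card_filter_val_lt]
  omega

end extremalFamily

theorem intervals_extremal_general (n k : ℕ) (hk : 1 ≤ k) :
    (∀ B : Fin n → Set ℝ, (∀ i, IsInterval (B i)) →
        (∀ x : ℝ, Set.ncard {i | x ∈ B i} ≤ k) →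
        interPairs B ≤ Nat.choose n 2 - Nat.choose (n - k + 1) 2) ∧
    (∃ B : Fin n → Set ℝ, (∀ i, IsInterval (B i)) ∧
        (∀ x : ℝ, Set.ncard {i | x ∈ B i} ≤ k) ∧
        interPairs B = Nat.choose n 2 - Nat.choose (n - k + 1) 2) := by
  have hchoose : (n - k + 1).choose 2 = (n - (k - 1)).choose 2 := by
    rcases le_or_gt k n with h | h
    · congr 1
      omega
    · rw [Nat.choose_eq_zero_of_lt (by omega), Nat.choose_eq_zero_of_lt (by omega)]
  rw [hchoose]
  exact ⟨fun B hB hd => interPairs_le_of_ncard_le hB hd, extremalFamily n k,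
    extremalFamily.isInterval, extremalFamily.ncard_setOf_mem_le hk, extremalFamily.interPairs_eq⟩

/-- For `n ≥ k ≥ 1`, the maximal number of intersecting pairs in a family of `n` closed
intervals in `ℝ`, no `k+1` of which have a common point, equals `C(n,2) - C(n-k+1, 2)`. -/
theorem intervals_extremal (n k : ℕ) (hkn : k ≤ n) (hk : 1 ≤ k) :
    (∀ B : Fin n → Set ℝ, (∀ i, IsInterval (B i)) →
        (∀ x : ℝ, Set.ncard {i | x ∈ B i} ≤ k) →
        interPairs B ≤ Nat.choose n 2 - Nat.choose (n - k + 1) 2) ∧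
    (∃ B : Fin n → Set ℝ, (∀ i, IsInterval (B i)) ∧
        (∀ x : ℝ, Set.ncard {i | x ∈ B i} ≤ k) ∧
        interPairs B = Nat.choose n 2 - Nat.choose (n - k + 1) 2) :=
  intervals_extremal_general n k hk
end

section
/- For all integers r, d with 1 ≤ r ≤ d, one has t(d, r) + d ≤ t(d, d) + r (equivalently, t(d,r) - r ≤ t(d,d) - d). -/
/-- For `1 ≤ r ≤ d`, `t(d, r) + d ≤ t(d, d) + r`, i.e. `t(d,r) - r ≤ t(d,d) - d`. -/
theorem turan_sub_le (r d : ℕ) (hr : 1 ≤ r) (hrd : r ≤ d) :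
    turanEdges d r + d ≤ turanEdges d d + r := by
  classical
  have hdd : turanEdges d d = d.choose 2 := by
    unfold turanEdges
    have h1 : (⊤ : SimpleGraph (Fin d)) ≤ SimpleGraph.turanGraph d d :=
      le_of_eq ((SimpleGraph.turanGraph_eq_top.2 (Or.inr le_rfl)).symm)
    refine le_antisymm ?_ ?_
    · simpa using (SimpleGraph.turanGraph d d).card_edgeFinset_le_card_choose_two
    · have h2 := Finset.card_le_card (SimpleGraph.edgeFinset_mono h1)
      rw [SimpleGraph.card_edgeFinset_top_eq_card_choose_two] at h2
      simpa using h2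
  -- the set of "extra" non-edges
  set T : Finset (Fin d) := Finset.univ.filter (fun v : Fin d => r ≤ v.val) with hT
  have hrpos : 0 < r := hr
  set f : Fin d → Sym2 (Fin d) := fun v => s(v, ⟨v.val % r, lt_of_lt_of_le (Nat.mod_lt _ hrpos) hrd⟩) with hf
  set S : Finset (Sym2 (Fin d)) := T.image f with hS
  have hinj : Set.InjOn f T := by
    intro a ha b hb hab
    simp only [hT, Finset.mem_coe, Finset.mem_filter] at ha hb
    simp only [hf, Sym2.eq_iff] at hab
    rcases hab with ⟨h1, _⟩ | ⟨h1, h2⟩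
    · exact h1
    · exfalso
      have h1' : (a : ℕ) = (b : ℕ) % r := congrArg Fin.val h1
      have := Nat.mod_lt (b : ℕ) hrpos
      omega
  have hcardS : S.card = d - r := by
    rw [hS, Finset.card_image_of_injOn hinj, hT]
    have : (Finset.univ.filter (fun v : Fin d => r ≤ v.val)) =
        (Finset.Ico r d).attachFin (fun m hm => (Finset.mem_Ico.1 hm).2) := by
      ext v
      simp [Finset.mem_attachFin, Finset.mem_Ico, v.isLt]
    rw [this, Finset.card_attachFin, Nat.card_Ico]
  have hdisj : Disjoint (SimpleGraph.turanGraph d r).edgeFinset S := by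
    rw [Finset.disjoint_right]
    intro e heS heG
    rw [hS, Finset.mem_image] at heS
    obtain ⟨v, hv, rfl⟩ := heS
    rw [SimpleGraph.mem_edgeFinset, hf] at heG
    have hadj : (SimpleGraph.turanGraph d r).Adj v ⟨(v : ℕ) % r, lt_of_lt_of_le (Nat.mod_lt _ hrpos) hrd⟩ :=
      heG
    have : (v : ℕ) % r ≠ ((v : ℕ) % r) % r := hadj
    exact this (Nat.mod_mod_of_dvd _ dvd_rfl).symm
  have hsub : (SimpleGraph.turanGraph d r).edgeFinset ∪ S ⊆ (⊤ : SimpleGraph (Fin d)).edgeFinset := by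
    intro e he
    rcases Finset.mem_union.1 he with h | h
    · exact SimpleGraph.edgeFinset_mono le_top h
    · rw [hS, Finset.mem_image] at h
      obtain ⟨v, hv, rfl⟩ := h
      simp only [hT, Finset.mem_filter] at hv
      rw [SimpleGraph.mem_edgeFinset, hf, SimpleGraph.mem_edgeSet, SimpleGraph.top_adj]
      intro hcon
      have := congrArg Fin.val hcon
      simp at this
      have : (v : ℕ) % r < r := Nat.mod_lt _ hrpos
      omega
  have := Finset.card_le_card hsub
  rw [Finset.card_union_of_disjoint hdisj, hcardS,
    SimpleGraph.card_edgeFinset_top_eq_card_choose_two] at this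
  unfold turanEdges at hdd ⊢
  simp only [Fintype.card_fin] at this
  omega
end

section
/- For all integers n, k, d with n ≥ k > d ≥ 1, there exists a family of n axis-parallel boxes in ℝ^d with the property that no k+1 of the boxes have a point in common, whose number of intersecting pairs equals Ψ(n, k, d) = t(n-k+d, d) + C(n,2) - C(n-k+d, 2). -/
open Finset

lemma half_pairs {m : ℕ} (G : SimpleGraph (Fin m)) [DecidableRel G.Adj] :
    G.edgeFinset.card =
      (univ.filter fun p : Fin m × Fin m => p.1 < p.2 ∧ G.Adj p.1 p.2).card := by
  have h2 := SimpleGraph.two_mul_card_edgeFinset (G := G)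
  have hsplit : (univ.filter fun (x : Fin m × Fin m) =>
      match x with | (x, y) => G.Adj x y) =
      (univ.filter fun p : Fin m × Fin m => p.1 < p.2 ∧ G.Adj p.1 p.2) ∪
      (univ.filter fun p : Fin m × Fin m => p.2 < p.1 ∧ G.Adj p.1 p.2) := by
    ext p
    simp only [mem_filter, mem_union, mem_univ, true_and]
    constructor
    · intro h
      rcases lt_trichotomy p.1 p.2 with h1 | h1 | h1
      · exact Or.inl ⟨h1, h⟩
      · exact absurd h1 (G.ne_of_adj h)
      · exact Or.inr ⟨h1, h⟩
    · rintro (⟨_, h⟩ | ⟨_, h⟩) <;> exact h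
  have hdisj : Disjoint (univ.filter fun p : Fin m × Fin m => p.1 < p.2 ∧ G.Adj p.1 p.2)
      (univ.filter fun p : Fin m × Fin m => p.2 < p.1 ∧ G.Adj p.1 p.2) := by
    rw [disjoint_filter]
    rintro p _ ⟨h1, _⟩ ⟨h2, _⟩
    exact absurd (h1.trans h2) (lt_irrefl _)
  have hbij : (univ.filter fun p : Fin m × Fin m => p.2 < p.1 ∧ G.Adj p.1 p.2).card =
      (univ.filter fun p : Fin m × Fin m => p.1 < p.2 ∧ G.Adj p.1 p.2).card := by
    apply Finset.card_nbij (fun p => p.swap)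
    · intro p hp
      simp only [mem_coe, mem_filter, mem_univ, true_and] at hp ⊢
      exact ⟨hp.1, hp.2.symm⟩
    · intro p hp q hq h
      exact Prod.swap_injective h
    · intro q hq
      refine ⟨q.swap, ?_, Prod.swap_swap q⟩
      simp only [mem_coe, mem_filter, mem_univ, true_and] at hq ⊢
      exact ⟨hq.1, hq.2.symm⟩
  rw [hsplit, Finset.card_union_of_disjoint hdisj, hbij] at h2
  omega

lemma card_ltpairs {n : ℕ} (Q : Fin n → Prop) [DecidablePred Q] :
    (univ.filter fun p : Fin n × Fin n => p.1 < p.2 ∧ Q p.2).card =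
      ∑ j ∈ univ.filter Q, (j : ℕ) := by
  rw [Finset.card_eq_sum_card_fiberwise (f := Prod.snd) (t := univ) (fun _ _ => mem_univ _)]
  rw [Finset.sum_filter]
  apply Finset.sum_congr rfl
  intro j _
  by_cases hQ : Q j
  · rw [if_pos hQ]
    have : ((univ.filter fun p : Fin n × Fin n => p.1 < p.2 ∧ Q p.2).filter
        fun p => p.snd = j).card = (univ.filter fun i : Fin n => i < j).card := by
      apply Finset.card_nbij (fun p => p.1)
      · rintro ⟨p1, p2⟩ hp
        simp only [mem_coe, mem_filter, mem_univ, true_and] at hp ⊢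
        rcases hp with ⟨⟨h1, _⟩, h2⟩
        subst h2; exact h1
      · rintro ⟨p1, p2⟩ hp ⟨q1, q2⟩ hq h
        simp only [mem_coe, mem_filter] at hp hq
        simp only at h
        subst h
        rw [hp.2, hq.2]
      · intro i hi
        refine ⟨(i, j), ?_, rfl⟩
        simp only [mem_coe, mem_filter, mem_univ, true_and] at hi ⊢
        exact ⟨⟨hi, hQ⟩, trivial⟩
    rw [this]
    rw [show (univ.filter fun i : Fin n => i < j) = Finset.Iio j by ext i; simp]
    exact Fin.card_Iio j
  · rw [if_neg hQ]
    rw [Finset.card_eq_zero, Finset.filter_eq_empty_iff]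
    rintro ⟨p1, p2⟩ hp
    simp only [mem_filter, mem_univ, true_and] at hp
    rintro rfl
    exact hQ hp.2


lemma sum_fin_val (n : ℕ) : ∑ j : Fin n, (j : ℕ) = n.choose 2 := by
  rw [Fin.sum_univ_eq_sum_range (fun i => i) n]
  have h := Finset.sum_range_id_mul_two n
  have h2 : n.choose 2 = n * (n - 1) / 2 := Nat.choose_two_right n
  omega

lemma sum_fin_val_lt (n m : ℕ) (h : m ≤ n) :
    ∑ j ∈ univ.filter (fun j : Fin n => (j : ℕ) < m), (j : ℕ) = m.choose 2 := by
  have : ∑ j ∈ univ.filter (fun j : Fin n => (j : ℕ) < m), (j : ℕ)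
      = ∑ i ∈ Finset.range m, i := by
    refine Finset.sum_nbij (fun j => (j : ℕ)) ?_ ?_ ?_ ?_
    · intro j hj
      simp only [mem_coe, mem_filter, mem_univ, true_and] at hj
      simpa using hj
    · intro a ha b hb hab
      simp only [mem_coe, mem_filter] at ha hb
      exact Fin.val_injective hab
    · intro i hi
      simp only [mem_coe, Finset.mem_range] at hi
      refine ⟨⟨i, lt_of_lt_of_le hi h⟩, ?_, rfl⟩
      simp [hi]
    · intro j _; rfl
  rw [this]
  have h2 := Finset.sum_range_id_mul_two m
  have h3 : m.choose 2 = m * (m - 1) / 2 := Nat.choose_two_right m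
  omega

lemma turan_count (m d : ℕ) :
    (univ.filter fun q : Fin m × Fin m => q.1 < q.2 ∧ (q.1 : ℕ) % d ≠ (q.2 : ℕ) % d).card
      = turanEdges m d := by
  rw [turanEdges]
  rw [half_pairs (SimpleGraph.turanGraph m d)]
  congr 1

/-- For `n ≥ k > d ≥ 1`, there is a family of `n` axis-parallel boxes in `ℝ^d` with no
`k+1` boxes having a common point and with exactly
`Ψ(n,k,d) = t(n-k+d, d) + (C(n,2) - C(n-k+d, 2))` intersecting pairs. -/
theorem boxes_lower_bound (n k d : ℕ) (hkn : k ≤ n) (hdk : d < k) (hd : 1 ≤ d) :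
    ∃ B : Fin n → Set (Fin d → ℝ), (∀ i, IsBox (B i)) ∧
      (∀ x : Fin d → ℝ, Set.ncard {i | x ∈ B i} ≤ k) ∧
      interPairs B =
        turanEdges (n - k + d) d + (Nat.choose n 2 - Nat.choose (n - k + d) 2) := by
  set m := n - k + d with hm
  have hmn : m < n := by omega
  have hmn' : m ≤ n := le_of_lt hmn
  have hd0 : 0 < d := hd
  -- box endpoints
  set aF : Fin n → Fin d → ℝ := fun i l =>
    if (i : ℕ) < m ∧ (l : ℕ) = (i : ℕ) % d then (((i : ℕ) / d : ℕ) : ℝ) else 0 with haF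
  set bF : Fin n → Fin d → ℝ := fun i l =>
    if (i : ℕ) < m ∧ (l : ℕ) = (i : ℕ) % d then (((i : ℕ) / d : ℕ) : ℝ) else (n : ℝ) with hbF
  set B : Fin n → Set (Fin d → ℝ) := fun i =>
    Set.pi Set.univ fun l => Set.Icc (aF i l) (bF i l) with hB
  have memB : ∀ (i : Fin n) (x : Fin d → ℝ),
      x ∈ B i ↔ ∀ l : Fin d, aF i l ≤ x l ∧ x l ≤ bF i l := by
    intro i x
    simp [hB, Set.mem_pi, Set.mem_Icc, Pi.le_def, forall_and]
  -- slab coordinate value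
  have slab : ∀ (i : Fin n) (x : Fin d → ℝ), (i : ℕ) < m → x ∈ B i →
      x ⟨(i : ℕ) % d, Nat.mod_lt _ hd0⟩ = (((i : ℕ) / d : ℕ) : ℝ) := by
    intro i x him hx
    have h := (memB i x).1 hx ⟨(i : ℕ) % d, Nat.mod_lt _ hd0⟩
    rw [haF, hbF] at h
    simp only [him, true_and] at h
    rw [if_pos trivial, if_pos trivial] at h
    exact le_antisymm h.2 h.1
  -- IsBox
  have hbox : ∀ i, ∃ a b : Fin d → ℝ, (∀ l, a l ≤ b l) ∧
      B i = Set.pi Set.univ (fun l => Set.Icc (a l) (b l)) := by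
    intro i
    refine ⟨aF i, bF i, fun l => ?_, rfl⟩
    rw [haF, hbF]
    dsimp only
    split_ifs
    · exact le_refl _
    · exact Nat.cast_nonneg n
  -- covering bound
  have hcover : ∀ x : Fin d → ℝ, Set.ncard {i | x ∈ B i} ≤ k := by
    intro x
    have hsub : {i | x ∈ B i} ⊆ {i : Fin n | m ≤ (i : ℕ)} ∪ {i : Fin n | (i : ℕ) < m ∧ x ∈ B i} := by
      intro i hi
      by_cases h : (i : ℕ) < m
      · exact Or.inr ⟨h, hi⟩
      · exact Or.inl (le_of_not_gt h)
    have h1 : Set.ncard {i : Fin n | m ≤ (i : ℕ)} = n - m := by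
      have : {i : Fin n | m ≤ (i : ℕ)} = ↑(univ.filter fun i : Fin n => m ≤ (i : ℕ)) := by
        ext i; simp
      rw [this, Set.ncard_coe_finset]
      have hlt : (univ.filter fun i : Fin n => (i : ℕ) < m).card = m := by
        have : (univ.filter fun i : Fin n => (i : ℕ) < m) = Finset.Iio (⟨m, hmn⟩ : Fin n) := by
          ext i
          simp [Fin.lt_def]
        rw [this, Fin.card_Iio]
      have hsplit := Finset.card_filter_add_card_filter_not
        (s := (univ : Finset (Fin n))) (p := fun i : Fin n => (i : ℕ) < m)
      simp only [Finset.card_univ, Fintype.card_fin] at hsplit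
      have : (univ.filter fun i : Fin n => ¬ (i : ℕ) < m)
          = (univ.filter fun i : Fin n => m ≤ (i : ℕ)) := by
        ext i; simp [Nat.not_lt]
      rw [this] at hsplit
      omega
    have h2 : Set.ncard {i : Fin n | (i : ℕ) < m ∧ x ∈ B i} ≤ d := by
      have : Set.ncard {i : Fin n | (i : ℕ) < m ∧ x ∈ B i} ≤ Set.ncard (↑(Finset.range d) : Set ℕ) := by
        refine Set.ncard_le_ncard_of_injOn (fun i => (i : ℕ) % d) ?_ ?_ (Set.toFinite _)
        · intro i hi
          simp [Nat.mod_lt _ hd0]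
        · intro i hi j hj hij
          simp only [Set.mem_setOf_eq] at hi hj
          have h1 := slab i x hi.1 hi.2
          have h2 := slab j x hj.1 hj.2
          have hc : (⟨(i : ℕ) % d, Nat.mod_lt _ hd0⟩ : Fin d) = ⟨(j : ℕ) % d, Nat.mod_lt _ hd0⟩ := by
            exact Fin.ext hij
          rw [hc] at h1
          rw [h2] at h1
          have hdiv : (j : ℕ) / d = (i : ℕ) / d := Nat.cast_injective h1
          simp only at hij
          have hmod : (i : ℕ) % d = (j : ℕ) % d := hij
          have hh1 := Nat.div_add_mod (i : ℕ) d
          have hh2 := Nat.div_add_mod (j : ℕ) d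
          rw [hdiv, ← hmod] at hh2
          exact Fin.ext (by omega)
      rw [Set.ncard_coe_finset, Finset.card_range] at this
      exact this
    calc Set.ncard {i | x ∈ B i} ≤ Set.ncard ({i : Fin n | m ≤ (i : ℕ)} ∪ {i : Fin n | (i : ℕ) < m ∧ x ∈ B i}) :=
          Set.ncard_le_ncard hsub (Set.toFinite _)
      _ ≤ Set.ncard {i : Fin n | m ≤ (i : ℕ)} + Set.ncard {i : Fin n | (i : ℕ) < m ∧ x ∈ B i} :=
          Set.ncard_union_le _ _
      _ ≤ (n - m) + d := by omega
      _ ≤ k := by omega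
  -- intersection characterization
  have inter_iff : ∀ i j : Fin n, i ≠ j →
      ((B i ∩ B j).Nonempty ↔
        ¬((i : ℕ) < m ∧ (j : ℕ) < m ∧ (i : ℕ) % d = (j : ℕ) % d)) := by
    intro i j hij
    constructor
    · rintro ⟨x, hxi, hxj⟩ ⟨him, hjm, hmod⟩
      have h1 := slab i x him hxi
      have h2 := slab j x hjm hxj
      have hc : (⟨(i : ℕ) % d, Nat.mod_lt _ hd0⟩ : Fin d) = ⟨(j : ℕ) % d, Nat.mod_lt _ hd0⟩ :=
        Fin.ext hmod
      rw [hc, h2] at h1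
      have hdiv : (j : ℕ) / d = (i : ℕ) / d := Nat.cast_injective h1
      have hh1 := Nat.div_add_mod (i : ℕ) d
      have hh2 := Nat.div_add_mod (j : ℕ) d
      rw [hdiv, ← hmod] at hh2
      exact hij (Fin.ext (by omega))
    · intro h
      refine ⟨fun l => if (i : ℕ) < m ∧ (l : ℕ) = (i : ℕ) % d then (((i : ℕ) / d : ℕ) : ℝ)
        else if (j : ℕ) < m ∧ (l : ℕ) = (j : ℕ) % d then (((j : ℕ) / d : ℕ) : ℝ) else 0, ?_, ?_⟩
      · rw [memB]
        intro l
        rw [haF, hbF]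
        dsimp only
        have hjn : ((j : ℕ) / d : ℕ) ≤ n := le_trans (Nat.div_le_self _ _) (le_of_lt j.isLt)
        have hin : ((i : ℕ) / d : ℕ) ≤ n := le_trans (Nat.div_le_self _ _) (le_of_lt i.isLt)
        split_ifs <;> refine ⟨?_, ?_⟩ <;>
          first
            | exact le_refl _
            | exact Nat.cast_nonneg _
            | exact_mod_cast hjn
            | exact_mod_cast hin
      · rw [memB]
        intro l
        rw [haF, hbF]
        dsimp only
        have hjn : ((j : ℕ) / d : ℕ) ≤ n := le_trans (Nat.div_le_self _ _) (le_of_lt j.isLt)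
        have hin : ((i : ℕ) / d : ℕ) ≤ n := le_trans (Nat.div_le_self _ _) (le_of_lt i.isLt)
        by_cases hA : (j : ℕ) < m ∧ (l : ℕ) = (j : ℕ) % d
        · rw [if_pos hA, if_pos hA]
          have hnotA : ¬((i : ℕ) < m ∧ (l : ℕ) = (i : ℕ) % d) := by
            rintro ⟨him, hli⟩
            exact h ⟨him, hA.1, by rw [← hli, hA.2]⟩
          rw [if_neg hnotA]
          exact ⟨le_refl _, le_refl _⟩
        · rw [if_neg hA, if_neg hA]
          split_ifs <;> refine ⟨?_, ?_⟩ <;>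
            first
              | exact le_refl _
              | exact Nat.cast_nonneg _
              | exact_mod_cast hjn
              | exact_mod_cast hin
  classical
  refine ⟨B, fun i => hbox i, hcover, ?_⟩
  have hset : {p : Fin n × Fin n | p.1 < p.2 ∧ (B p.1 ∩ B p.2).Nonempty}
      = ↑(univ.filter fun p : Fin n × Fin n => p.1 < p.2 ∧
        ¬((p.1 : ℕ) < m ∧ (p.2 : ℕ) < m ∧ (p.1 : ℕ) % d = (p.2 : ℕ) % d)) := by
    ext p
    simp only [Set.mem_setOf_eq, Finset.coe_filter, Finset.mem_univ, true_and]
    constructor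
    · rintro ⟨hlt, hne⟩
      exact ⟨hlt, (inter_iff p.1 p.2 (ne_of_lt hlt)).1 hne⟩
    · rintro ⟨hlt, hc⟩
      exact ⟨hlt, (inter_iff p.1 p.2 (ne_of_lt hlt)).2 hc⟩
  have hIP : interPairs B = (univ.filter fun p : Fin n × Fin n => p.1 < p.2 ∧
      ¬((p.1 : ℕ) < m ∧ (p.2 : ℕ) < m ∧ (p.1 : ℕ) % d = (p.2 : ℕ) % d)).card := by
    rw [interPairs, hset, Set.ncard_coe_finset]
  have hsplitF : (univ.filter fun p : Fin n × Fin n => p.1 < p.2 ∧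
      ¬((p.1 : ℕ) < m ∧ (p.2 : ℕ) < m ∧ (p.1 : ℕ) % d = (p.2 : ℕ) % d))
      = (univ.filter fun p : Fin n × Fin n => p.1 < p.2 ∧ m ≤ (p.2 : ℕ)) ∪
        (univ.filter fun p : Fin n × Fin n => p.1 < p.2 ∧
          ((p.2 : ℕ) < m ∧ (p.1 : ℕ) % d ≠ (p.2 : ℕ) % d)) := by
    ext p
    simp only [Finset.mem_union, Finset.mem_filter, Finset.mem_univ, true_and]
    constructor
    · rintro ⟨hlt, hc⟩
      by_cases h2 : (p.2 : ℕ) < m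
      · have hv : (p.1 : ℕ) < (p.2 : ℕ) := hlt
        exact Or.inr ⟨hlt, h2, fun hmod => hc ⟨by omega, h2, hmod⟩⟩
      · exact Or.inl ⟨hlt, le_of_not_gt h2⟩
    · rintro (⟨hlt, h2⟩ | ⟨hlt, h2, h3⟩)
      · exact ⟨hlt, fun hc => absurd hc.2.1 (not_lt.2 h2)⟩
      · exact ⟨hlt, fun hc => h3 hc.2.2⟩
  have hdisj : Disjoint (univ.filter fun p : Fin n × Fin n => p.1 < p.2 ∧ m ≤ (p.2 : ℕ))
      (univ.filter fun p : Fin n × Fin n => p.1 < p.2 ∧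
        ((p.2 : ℕ) < m ∧ (p.1 : ℕ) % d ≠ (p.2 : ℕ) % d)) := by
    rw [Finset.disjoint_left]
    intro p hp1 hp2
    simp only [Finset.mem_filter, Finset.mem_univ, true_and] at hp1 hp2
    omega
  have hcF1 : (univ.filter fun p : Fin n × Fin n => p.1 < p.2 ∧ m ≤ (p.2 : ℕ)).card
      = n.choose 2 - m.choose 2 := by
    rw [card_ltpairs (fun j : Fin n => m ≤ (j : ℕ))]
    have hadd := Finset.sum_filter_add_sum_filter_not (univ : Finset (Fin n))
      (fun j : Fin n => m ≤ (j : ℕ)) (fun j => (j : ℕ))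
    rw [sum_fin_val n] at hadd
    have hneg : (univ.filter fun j : Fin n => ¬ m ≤ (j : ℕ))
        = (univ.filter fun j : Fin n => (j : ℕ) < m) := by
      ext j; simp [Nat.not_le]
    rw [hneg, sum_fin_val_lt n m hmn'] at hadd
    omega
  have hcF2 : (univ.filter fun p : Fin n × Fin n => p.1 < p.2 ∧
      ((p.2 : ℕ) < m ∧ (p.1 : ℕ) % d ≠ (p.2 : ℕ) % d)).card = turanEdges m d := by
    rw [← turan_count m d]
    refine (Finset.card_nbij
      (fun q : Fin m × Fin m => ((q.1.castLE hmn' : Fin n), (q.2.castLE hmn' : Fin n)))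
      ?_ ?_ ?_).symm
    · intro q hq
      simp only [Finset.mem_coe, Finset.mem_filter, Finset.mem_univ, true_and] at hq ⊢
      refine ⟨hq.1, q.2.isLt, hq.2⟩
    · intro q1 h1 q2 h2 heq
      simp only [Prod.ext_iff] at heq ⊢
      exact ⟨Fin.castLE_injective hmn' heq.1, Fin.castLE_injective hmn' heq.2⟩
    · intro p hp
      simp only [Finset.mem_coe, Finset.mem_filter, Finset.mem_univ, true_and] at hp
      obtain ⟨hlt, h2m, hmod⟩ := hp
      have h1m : (p.1 : ℕ) < m := lt_trans hlt h2m
      refine ⟨(⟨(p.1 : ℕ), h1m⟩, ⟨(p.2 : ℕ), h2m⟩), ?_, ?_⟩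
      · simp only [Finset.mem_coe, Finset.mem_filter, Finset.mem_univ, true_and]
        exact ⟨hlt, hmod⟩
      · exact Prod.ext (Fin.ext rfl) (Fin.ext rfl)
  rw [hIP, hsplitF, Finset.card_union_of_disjoint hdisj, hcF1, hcF2]
  exact add_comm _ _
end

section
/- For all integers n, k, d with n ≥ k > d ≥ 1, every family of n axis-parallel boxes in ℝ^d with the property that no k+1 of the boxes have a point in common has number of intersecting pairs E satisfying (as real numbers) E ≤ ((d-1)/(2d))·n² + (k/d - 1)·n + (k/2)·(1 - k/d), and moreover ((d-1)/(2d))·n² + (k/d - 1)·n + (k/2)·(1 - k/d) < ((d-1)/(2d))·n² + ((2k+d)/(2d))·n. -/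
lemma ceil_sum_id (d : ℕ) (hd : 0 < d) (M : ℕ) :
    2*d*(∑ i ∈ Finset.range M, (i + d)/d) = M*(M+d) + (M % d)*(d - M % d) := by
  induction M with
  | zero => simp
  | succ M ih =>
    obtain ⟨q, r, hr, rfl⟩ : ∃ q r, r < d ∧ M = d*q + r :=
      ⟨M / d, M % d, Nat.mod_lt _ hd, (Nat.div_add_mod M d).symm⟩
    have hrm : (d*q + r) % d = r := by rw [Nat.mul_add_mod, Nat.mod_eq_of_lt hr]
    have hdiv : (d*q + r + d)/d = q + 1 := by
      rw [Nat.add_div_right _ hd, Nat.mul_add_div hd, Nat.div_eq_of_lt hr]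
    rw [hrm] at ih
    rw [Finset.sum_range_succ, hdiv]
    by_cases hrd : r + 1 = d
    · have hmod : (d*q + r + 1) % d = 0 := by
        have h : d*q + r + 1 = d * (q+1) := by rw [Nat.mul_succ]; omega
        rw [h, Nat.mul_mod_right]
      rw [hmod]
      subst hrd
      zify [hr.le] at ih ⊢
      linear_combination ih
    · have hmod : (d*q + r + 1) % d = r + 1 := by
        rw [add_assoc, Nat.mul_add_mod, Nat.mod_eq_of_lt (by omega)]
      rw [hmod]
      zify [hr.le, show r + 1 ≤ d by omega] at ih ⊢
      linear_combination ih

open Finset in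
open Classical in
lemma boxes_aux {n : ℕ} (k d : ℕ) (hd : 0 < d) (a b : Fin n → Fin d → ℝ)
    (hab : ∀ i c, a i c ≤ b i c)
    (hcap : ∀ x : Fin d → ℝ,
      (Finset.univ.filter (fun i => ∀ c, a i c ≤ x c ∧ x c ≤ b i c)).card ≤ k)
    (s : Finset (Fin n)) :
    ∑ i ∈ Finset.range (s.card - k), (i + d) / d ≤
      ((s ×ˢ s).filter (fun p =>
        p.1 < p.2 ∧ ¬ ∀ c, a p.1 c ≤ b p.2 c ∧ a p.2 c ≤ b p.1 c)).card := by
  induction s using Finset.strongInduction with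
  | _ s ih =>
  by_cases hsk : s.card ≤ k
  · simp [Nat.sub_eq_zero_of_le hsk]
  push_neg at hsk
  have hne : s.Nonempty := card_pos.mp (by omega)
  choose w hws hwmin using fun c : Fin d => s.exists_min_image (fun u => b u c) hne
  set q : Fin d → ℝ := fun c => b (w c) c with hq
  have hcover : s ⊆ (s.filter (fun u => ∀ c, a u c ≤ q c ∧ q c ≤ b u c)) ∪
      Finset.univ.biUnion (fun c : Fin d =>
        s.filter (fun u => ¬ ∀ c', a u c' ≤ b (w c) c' ∧ a (w c) c' ≤ b u c')) := by
    intro u hu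
    by_cases hqu : ∀ c, a u c ≤ q c
    · exact mem_union_left _ (mem_filter.mpr ⟨hu, fun c => ⟨hqu c, hwmin c u hu⟩⟩)
    · push_neg at hqu
      obtain ⟨c, hc⟩ := hqu
      refine mem_union_right _ (mem_biUnion.mpr ⟨c, mem_univ _, mem_filter.mpr ⟨hu, ?_⟩⟩)
      intro hgood
      exact absurd (hgood c).1 (not_le.mpr hc)
  have hcard : s.card ≤ k + ∑ c : Fin d,
      (s.filter (fun u => ¬ ∀ c', a u c' ≤ b (w c) c' ∧ a (w c) c' ≤ b u c')).card := by
    refine le_trans (card_le_card hcover) (le_trans (card_union_le _ _) ?_)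
    gcongr
    · refine le_trans (card_le_card ?_) (hcap q)
      intro u hu
      simp only [mem_filter] at hu ⊢
      exact ⟨mem_univ _, hu.2⟩
    · exact card_biUnion_le
  haveI : Nonempty (Fin d) := Fin.pos_iff_nonempty.mp hd
  obtain ⟨c₀, -, hc₀⟩ := Finset.exists_max_image (univ : Finset (Fin d))
    (fun c => (s.filter (fun u => ¬ ∀ c', a u c' ≤ b (w c) c' ∧ a (w c) c' ≤ b u c')).card)
    univ_nonempty
  set v := w c₀ with hv
  have hvs : v ∈ s := hws c₀
  set Δ := s.filter (fun u => ¬ ∀ c', a u c' ≤ b v c' ∧ a v c' ≤ b u c') with hΔ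
  have hdelta : s.card - k ≤ d * Δ.card := by
    have hsum : ∑ c : Fin d,
        (s.filter (fun u => ¬ ∀ c', a u c' ≤ b (w c) c' ∧ a (w c) c' ≤ b u c')).card
        ≤ d * Δ.card := by
      calc _ ≤ ∑ _c : Fin d, Δ.card := Finset.sum_le_sum (fun c _ => hc₀ c (mem_univ c))
      _ = d * Δ.card := by simp [Finset.sum_const, mul_comm]
    omega
  set Pred : Fin n × Fin n → Prop := fun p =>
    p.1 < p.2 ∧ ¬ ∀ c, a p.1 c ≤ b p.2 c ∧ a p.2 c ≤ b p.1 c with hPred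
  set D1 := ((s.erase v) ×ˢ (s.erase v)).filter Pred with hD1
  set D2 := Δ.image (fun u => if u < v then (u, v) else (v, u)) with hD2
  have hneq : ∀ u ∈ Δ, u ≠ v := by
    intro u hu huv
    subst huv
    exact (mem_filter.mp hu).2 (fun c' => ⟨hab v c', hab v c'⟩)
  have hsub : D1 ∪ D2 ⊆ (s ×ˢ s).filter Pred := by
    refine union_subset ?_ ?_
    · exact filter_subset_filter _ (product_subset_product (erase_subset _ _) (erase_subset _ _))
    · intro p hp
      obtain ⟨u, hu, rfl⟩ := mem_image.mp hp
      have huS := (mem_filter.mp hu).1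
      have hug := (mem_filter.mp hu).2
      have hune := hneq u hu
      by_cases hlt : u < v
      · simp only [if_pos hlt]
        exact mem_filter.mpr ⟨mem_product.mpr ⟨huS, hvs⟩, hlt, hug⟩
      · have hvu : v < u := (hune.lt_or_gt).resolve_left hlt
        simp only [if_neg hlt]
        refine mem_filter.mpr ⟨mem_product.mpr ⟨hvs, huS⟩, hvu, ?_⟩
        intro hgood
        exact hug (fun c => ⟨(hgood c).2, (hgood c).1⟩)
  have hdisj : Disjoint D1 D2 := by
    rw [Finset.disjoint_left]
    intro p hp1 hp2
    obtain ⟨u, hu, heq⟩ := mem_image.mp hp2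
    have hp1' := (mem_filter.mp hp1).1
    have h1 : p.1 ≠ v := (Finset.mem_erase.mp (mem_product.mp hp1').1).1
    have h2 : p.2 ≠ v := (Finset.mem_erase.mp (mem_product.mp hp1').2).1
    by_cases hlt : u < v
    · rw [if_pos hlt] at heq
      exact h2 (by rw [← heq])
    · rw [if_neg hlt] at heq
      exact h1 (by rw [← heq])
  have hcard2 : D2.card = Δ.card := by
    rw [hD2]
    apply Finset.card_image_of_injOn
    intro u1 h1 u2 h2 heq
    by_cases hl1 : u1 < v <;> by_cases hl2 : u2 < v <;>
      simp only [if_pos, if_neg, hl1, hl2] at heq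
    · exact (Prod.mk.injEq _ _ _ _ ▸ heq).1
    · exact absurd ((Prod.mk.injEq _ _ _ _ ▸ heq).1) (ne_of_lt hl1)
    · exact absurd ((Prod.mk.injEq _ _ _ _ ▸ heq).1).symm (ne_of_lt hl2)
    · exact (Prod.mk.injEq _ _ _ _ ▸ heq).2
  have hstep : ((s.card - k - 1) + d)/d ≤ Δ.card := by
    have h1 : (s.card - k - 1) + d ≤ d * Δ.card + (d - 1) := by omega
    calc ((s.card - k - 1) + d)/d ≤ (d * Δ.card + (d-1))/d := Nat.div_le_div_right h1
    _ = Δ.card + (d-1)/d := Nat.mul_add_div hd _ _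
    _ = Δ.card := by rw [Nat.div_eq_of_lt (by omega)]; ring
  have hih := ih (s.erase v) (Finset.erase_ssubset hvs)
  have hec : (s.erase v).card - k = s.card - k - 1 := by
    rw [Finset.card_erase_of_mem hvs]; omega
  rw [hec] at hih
  have hM : s.card - k = (s.card - k - 1) + 1 := by omega
  calc ∑ i ∈ Finset.range (s.card - k), (i + d) / d
      = ∑ i ∈ Finset.range (s.card - k - 1), (i + d) / d + ((s.card - k - 1) + d)/d := by
        conv_lhs => rw [hM, Finset.sum_range_succ]
    _ ≤ D1.card + D2.card := add_le_add hih (hcard2 ▸ hstep)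
    _ = (D1 ∪ D2).card := (Finset.card_union_of_disjoint hdisj).symm
    _ ≤ _ := card_le_card hsub

open Finset in
lemma count_lt (n : ℕ) :
    2 * (((univ : Finset (Fin n)) ×ˢ univ).filter (fun p => p.1 < p.2)).card + n = n * n := by
  classical
  have hswap : (((univ : Finset (Fin n)) ×ˢ univ).filter (fun p => p.2 < p.1)).card
      = (((univ : Finset (Fin n)) ×ˢ univ).filter (fun p => p.1 < p.2)).card := by
    apply Finset.card_bij (fun p _ => Prod.swap p)
    · intro p hp
      simp only [mem_filter, mem_product, mem_univ, true_and] at hp ⊢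
      exact hp
    · intro p _ q _ h
      exact Prod.swap_injective h
    · intro q hq
      refine ⟨q.swap, ?_, by simp⟩
      simp only [mem_filter, mem_product, mem_univ, true_and] at hq ⊢
      exact hq
  have hunion : (((univ : Finset (Fin n)) ×ˢ univ).filter (fun p => p.1 < p.2)) ∪
      (((univ : Finset (Fin n)) ×ˢ univ).filter (fun p => p.2 < p.1))
      = (univ : Finset (Fin n)).offDiag := by
    ext p
    constructor
    · intro hp
      rcases mem_union.mp hp with h | h
      · exact mem_offDiag.mpr ⟨mem_univ _, mem_univ _, (mem_filter.mp h).2.ne⟩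
      · exact mem_offDiag.mpr ⟨mem_univ _, mem_univ _, (mem_filter.mp h).2.ne'⟩
    · intro hp
      obtain ⟨-, -, hne⟩ := mem_offDiag.mp hp
      rcases hne.lt_or_gt with h | h
      · exact mem_union_left _ (mem_filter.mpr ⟨mem_product.mpr ⟨mem_univ _, mem_univ _⟩, h⟩)
      · exact mem_union_right _ (mem_filter.mpr ⟨mem_product.mpr ⟨mem_univ _, mem_univ _⟩, h⟩)
  have hdisj : Disjoint (((univ : Finset (Fin n)) ×ˢ univ).filter (fun p => p.1 < p.2))
      (((univ : Finset (Fin n)) ×ˢ univ).filter (fun p => p.2 < p.1)) := by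
    rw [Finset.disjoint_left]
    intro p h1 h2
    exact absurd (mem_filter.mp h2).2 (not_lt.mpr (mem_filter.mp h1).2.le)
  have hcards := Finset.card_union_of_disjoint hdisj
  rw [hunion, Finset.offDiag_card, hswap] at hcards
  simp only [card_univ, Fintype.card_fin] at hcards
  rcases Nat.eq_zero_or_pos n with h0 | h0
  · subst h0
    simp
  · have hle : n ≤ n * n := Nat.le_mul_of_pos_left n h0
    calc 2 * _ + n = _ + _ + n := by rw [two_mul]
    _ = (n * n - n) + n := by rw [hcards]
    _ = n * n := Nat.sub_add_cancel hle

/-- For `n ≥ k > d ≥ 1`, the number `E` of intersecting pairs of any family of `n`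
axis-parallel boxes in `ℝ^d`, no `k+1` of which have a common point, satisfies
`E ≤ ((d-1)/(2d))n² + (k/d - 1)n + (k/2)(1 - k/d)`, and this bound is strictly smaller
than `((d-1)/(2d))n² + ((2k+d)/(2d))n`. -/
theorem boxes_real_bound (n k d : ℕ) (hkn : k ≤ n) (hdk : d < k) (hd : 1 ≤ d)
    (B : Fin n → Set (Fin d → ℝ)) (hbox : ∀ i, IsBox (B i))
    (hcap : ∀ x : Fin d → ℝ, Set.ncard {i | x ∈ B i} ≤ k) :
    (interPairs B : ℝ) ≤
      ((d : ℝ) - 1) / (2 * d) * n ^ 2 + ((k : ℝ) / d - 1) * n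
        + (k : ℝ) / 2 * (1 - (k : ℝ) / d) ∧
    ((d : ℝ) - 1) / (2 * d) * n ^ 2 + ((k : ℝ) / d - 1) * n
        + (k : ℝ) / 2 * (1 - (k : ℝ) / d) <
      ((d : ℝ) - 1) / (2 * d) * n ^ 2 + (2 * (k : ℝ) + d) / (2 * d) * n := by
  classical
  have hbox' : ∀ i, ∃ a b : Fin d → ℝ, (∀ c, a c ≤ b c) ∧
      B i = Set.pi Set.univ (fun c => Set.Icc (a c) (b c)) := hbox
  simp only [interPairs]

  choose a bb hab hB using hbox'
  have hmem : ∀ (x : Fin d → ℝ) i, x ∈ B i ↔ ∀ c, a i c ≤ x c ∧ x c ≤ bb i c := by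
    intro x i
    rw [hB i]
    simp only [Set.mem_pi, Set.mem_univ, Set.mem_Icc, forall_true_left]
  have hgood : ∀ i j, (B i ∩ B j).Nonempty ↔ ∀ c, a i c ≤ bb j c ∧ a j c ≤ bb i c := by
    intro i j
    constructor
    · rintro ⟨x, hxi, hxj⟩
      rw [hmem] at hxi hxj
      exact fun c => ⟨le_trans (hxi c).1 (hxj c).2, le_trans (hxj c).1 (hxi c).2⟩
    · intro h
      refine ⟨fun c => max (a i c) (a j c), ?_, ?_⟩
      · rw [hmem]
        exact fun c => ⟨le_max_left _ _, max_le (hab i c) (h c).2⟩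
      · rw [hmem]
        exact fun c => ⟨le_max_right _ _, max_le (h c).1 (hab j c)⟩
  have hcap' : ∀ x : Fin d → ℝ,
      (Finset.univ.filter (fun i => ∀ c, a i c ≤ x c ∧ x c ≤ bb i c)).card ≤ k := by
    intro x
    have hxe : {i | x ∈ B i} =
        ↑(Finset.univ.filter (fun i => ∀ c, a i c ≤ x c ∧ x c ≤ bb i c)) := by
      ext i; simp [hmem]
    have := hcap x
    rwa [hxe, Set.ncard_coe_finset] at this
  -- notation
  set T := (((Finset.univ : Finset (Fin n)) ×ˢ Finset.univ).filter
    (fun p => p.1 < p.2)) with hT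
  set E := Set.ncard {p : Fin n × Fin n | p.1 < p.2 ∧ (B p.1 ∩ B p.2).Nonempty} with hE
  have hEcard : E = (T.filter (fun p => (B p.1 ∩ B p.2).Nonempty)).card := by
    rw [hE]
    have hset : {p : Fin n × Fin n | p.1 < p.2 ∧ (B p.1 ∩ B p.2).Nonempty}
        = ↑(T.filter (fun p => (B p.1 ∩ B p.2).Nonempty)) := by
      ext p
      simp [hT, and_assoc]
    rw [hset, Set.ncard_coe_finset]
  have hsplit : (T.filter (fun p => (B p.1 ∩ B p.2).Nonempty)).card
      + (T.filter (fun p => ¬ (B p.1 ∩ B p.2).Nonempty)).card = T.card :=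
    Finset.card_filter_add_card_filter_not _
  -- identify the disjoint-pairs finset with the aux lemma's one
  have hDeq : (T.filter (fun p => ¬ (B p.1 ∩ B p.2).Nonempty))
      = ((Finset.univ ×ˢ Finset.univ).filter (fun p : Fin n × Fin n =>
          p.1 < p.2 ∧ ¬ ∀ c, a p.1 c ≤ bb p.2 c ∧ a p.2 c ≤ bb p.1 c)) := by
    rw [hT, Finset.filter_filter]
    apply Finset.filter_congr
    intro p _
    simp only [hgood]
  have haux := boxes_aux k d (by omega) a bb hab hcap' (Finset.univ : Finset (Fin n))
  rw [Finset.card_univ, Fintype.card_fin] at haux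
  have hpeel : ∑ i ∈ Finset.range (n - k), (i + d) / d
      ≤ (T.filter (fun p => ¬ (B p.1 ∩ B p.2).Nonempty)).card := by
    rw [hDeq]
    exact haux
  have hsum := ceil_sum_id d (by omega) (n - k)
  have hTot := count_lt n
  -- real arithmetic
  set Sn := ∑ i ∈ Finset.range (n - k), (i + d) / d with hSn
  set Dc := (T.filter (fun p => ¬ (B p.1 ∩ B p.2).Nonempty)).card with hDc
  have hdn : 0 < d := by omega
  have hd0 : (0:ℝ) < d := by exact_mod_cast hdn
  have hkd : (d:ℝ) < k := by exact_mod_cast hdk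
  have hnk : (k:ℝ) ≤ n := by exact_mod_cast hkn
  have hk1 : (1:ℝ) ≤ k := by
    have : 1 ≤ k := by omega
    exact_mod_cast this
  have hA : ((n:ℝ)-k)*(((n:ℝ)-k)+d) ≤ 2*d*(Sn:ℝ) := by
    have h1 : (n-k)*(n-k+d) ≤ 2*d*Sn := hsum.symm ▸ Nat.le_add_right _ _
    have h2 : (((n-k)*(n-k+d) : ℕ) : ℝ) ≤ ((2*d*Sn : ℕ) : ℝ) := Nat.cast_le.mpr h1
    push_cast [Nat.cast_sub hkn] at h2
    exact h2
  have hc3 : ((n:ℝ)-k)*(((n:ℝ)-k)+d)/(2*d) ≤ (Sn:ℝ) := by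
    rw [div_le_iff₀ (by positivity)]
    linarith
  have hc2 : (Sn:ℝ) ≤ (Dc:ℝ) := Nat.cast_le.mpr hpeel
  have hc1 : (E:ℝ) + (Dc:ℝ) = (T.card:ℝ) := by
    have := hEcard ▸ hsplit
    exact_mod_cast this
  have hc4 : 2*((T.card):ℝ) + n = n*n := by exact_mod_cast hTot
  constructor
  · have hident : ((d : ℝ) - 1) / (2 * d) * n ^ 2 + ((k : ℝ) / d - 1) * n
        + (k : ℝ) / 2 * (1 - (k : ℝ) / d)
        = ((n:ℝ)*n - n)/2 - ((n:ℝ)-k)*(((n:ℝ)-k)+d)/(2*d) := by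
      field_simp
      ring
    rw [hident]
    linarith
  · have key : 0 < (2*(k:ℝ)+d)/(2*d)*n - (((k:ℝ)/d - 1)*n + (k:ℝ)/2*(1 - (k:ℝ)/d)) := by
      have h1 : (2*(k:ℝ)+d)/(2*d)*n - (((k:ℝ)/d - 1)*n + (k:ℝ)/2*(1 - (k:ℝ)/d))
          = (3*(d:ℝ)*n + k*(k - d))/(2*d) := by
        field_simp
        ring
      rw [h1]
      apply div_pos ?_ (by positivity)
      nlinarith
    linarith
end

section
/- For every integer m ≥ 1, the sequence n ↦ t(n, m) / (n²/2) converges to 1 - 1/m as n → ∞. -/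
/-!
Mathlib's bound `2m·t(n,m) ≤ (m-1)n²` gives the upper estimate. Its exact count
`t(n,m) = ⌊(n² - s²)(m-1)/(2m)⌋ + C(s,2)`, with `s = n % m < m`, shows that `2m·t(n,m)` falls
short of `(m-1)n²` by `O(m³)`, which is negligible against `n²`; the limit follows by squeezing.
-/

open Finset SimpleGraph Filter Topology

namespace SimpleGraph

theorem le_mul_card_edgeFinset_turanGraph_add (n r : ℕ) :
    (r - 1) * n ^ 2 ≤ 2 * r * (#(turanGraph n r).edgeFinset + 1) + (r - 1) * r ^ 2 := by
  rcases r.eq_zero_or_pos with rfl | hr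
  · simp
  set s := n % r
  have hs : s ^ 2 ≤ r ^ 2 := by gcongr; exact (Nat.mod_lt n hr).le
  have hsn : s ^ 2 ≤ n ^ 2 := by gcongr; exact Nat.mod_le n r
  have hdiv := Nat.lt_mul_div_succ ((n ^ 2 - s ^ 2) * (r - 1)) (by positivity : 0 < 2 * r)
  calc (r - 1) * n ^ 2 = (n ^ 2 - s ^ 2) * (r - 1) + (r - 1) * s ^ 2 := by
        rw [mul_comm (r - 1) (s ^ 2), ← Nat.add_mul, Nat.sub_add_cancel hsn, mul_comm]
    _ ≤ 2 * r * (#(turanGraph n r).edgeFinset + 1) + (r - 1) * r ^ 2 := by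
        rw [card_edgeFinset_turanGraph]
        gcongr ?_ + ?_
        · grw [hdiv.le]; gcongr; exact Nat.le_add_right _ _
        · gcongr

end SimpleGraph

theorem turanEdges_div_le (n : ℕ) {m : ℕ} (hm : 1 ≤ m) :
    (turanEdges n m : ℝ) / ((n : ℝ) ^ 2 / 2) ≤ 1 - 1 / m := by
  have hm' : (1 : ℝ) ≤ m := by exact_mod_cast hm
  rcases n.eq_zero_or_pos with rfl | hn
  · simpa using inv_le_one_of_one_le₀ hm'
  have hn' : (0 : ℝ) < n := by exact_mod_cast hn
  have h : 2 * (m : ℝ) * turanEdges n m ≤ (m - 1) * n ^ 2 := by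
    have := Nat.cast_le (α := ℝ) |>.mpr (mul_card_edgeFinset_turanGraph_le (n := n) (r := m))
    push_cast [Nat.cast_sub hm] at this
    exact this
  rw [div_le_iff₀ (by positivity)]
  field_simp
  linarith

theorem sub_le_turanEdges_div {n m : ℕ} (hm : 1 ≤ m) (hn : 0 < n) :
    1 - 1 / (m : ℝ) - ((m : ℝ) ^ 2 + 2) / (n : ℝ) ^ 2 ≤
      (turanEdges n m : ℝ) / ((n : ℝ) ^ 2 / 2) := by
  have hm' : (1 : ℝ) ≤ m := by exact_mod_cast hm
  have hn' : (0 : ℝ) < n := by exact_mod_cast hn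
  have h : ((m : ℝ) - 1) * n ^ 2 ≤ 2 * m * (turanEdges n m + 1) + (m - 1) * m ^ 2 := by
    have := Nat.cast_le (α := ℝ) |>.mpr (le_mul_card_edgeFinset_turanGraph_add n m)
    push_cast [Nat.cast_sub hm] at this
    exact this
  rw [le_div_iff₀ (by positivity)]
  field_simp
  nlinarith

/-- For `m ≥ 1`, `t(n, m) / (n²/2) → 1 - 1/m` as `n → ∞`. -/
theorem turan_density (m : ℕ) (hm : 1 ≤ m) :
    Filter.Tendsto (fun n : ℕ => (turanEdges n m : ℝ) / ((n : ℝ) ^ 2 / 2))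
      Filter.atTop (nhds (1 - 1 / (m : ℝ))) := by
  have hlower : Tendsto (fun n : ℕ => 1 - 1 / (m : ℝ) - ((m : ℝ) ^ 2 + 2) / (n : ℝ) ^ 2) atTop
      (𝓝 (1 - 1 / (m : ℝ))) := by
    simpa using tendsto_const_nhds.sub <| tendsto_const_nhds.div_atTop <|
      (tendsto_pow_atTop two_ne_zero).comp (tendsto_natCast_atTop_atTop (R := ℝ))
  refine tendsto_of_tendsto_of_tendsto_of_le_of_le' hlower tendsto_const_nhds ?_ ?_
  · filter_upwards [eventually_gt_atTop 0] with n hn using sub_le_turanEdges_div hm hn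
  · exact .of_forall fun n => turanEdges_div_le n hm
end
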